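/- arXiv:2009.01514 — 7 statements merged into one kernel-verified Lean document; each statement's English description precedes it below -/
import Mathlib

section
/- For every real ν ≥ 1/2 and every f ∈ H one has T^ν (f − P f) = 0, where T^ν is the fractional power of the positive operator T given by the continuous functional calculus. -/
/-!
`f - P f` lies in the kernel of `S`, hence in the kernel of `T = S* S`. For a positive `T`
one has `‖T^(1/2) g‖² = ⟪T g, g⟫`, so `T^(1/2)` kills `ker T`, and for `ν ≥ 1/2` the power
`T^ν = T^(ν - 1/2) T^(1/2)` kills it as well.
-/

open ContinuousLinearMap

/-- The fractional power `A ^ s` of a (positive) operator, defined via the continuous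
functional calculus applied to the real function `x ↦ x ^ s`. -/
noncomputable def opow {H : Type*} [NormedAddCommGroup H] [InnerProductSpace ℂ H]
    [CompleteSpace H] (A : H →L[ℂ] H) (s : ℝ) : H →L[ℂ] H :=
  cfc (fun x : ℝ => x ^ s) A

open scoped InnerProductSpace

section AdjointComp

variable {𝕜 E F : Type*} [RCLike 𝕜] [NormedAddCommGroup E] [InnerProductSpace 𝕜 E]
  [CompleteSpace E] [NormedAddCommGroup F] [InnerProductSpace 𝕜 F] [CompleteSpace F]

theorem apply_sub_adjoint_ringInverse_apply_eq_zero (S : E →L[𝕜] F)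
    (hS : IsUnit (S ∘L adjoint S)) (f : E) :
    S (f - adjoint S (Ring.inverse (S ∘L adjoint S) (S f))) = 0 := by
  have hSP : S (adjoint S (Ring.inverse (S ∘L adjoint S) (S f)))
      = ((S ∘L adjoint S) * Ring.inverse (S ∘L adjoint S)) (S f) := rfl
  rw [map_sub, hSP, Ring.mul_inverse_cancel _ hS]
  exact sub_self _

theorem adjoint_comp_self_nonneg (S : E →L[𝕜] F) : 0 ≤ adjoint S ∘L S :=
  (nonneg_iff_isPositive _).mpr (isPositive_adjoint_comp_self S)

end AdjointComp

section FractionalPower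

variable {H : Type*} [NormedAddCommGroup H] [InnerProductSpace ℂ H] [CompleteSpace H]
  {A : H →L[ℂ] H}

theorem norm_sqrt_apply_sq (hA : 0 ≤ A) (x : H) :
    ‖CFC.sqrt A x‖ ^ 2 = RCLike.re ⟪A x, x⟫_ℂ := by
  rw [apply_norm_sq_eq_inner_adjoint_left, (CFC.sqrt_nonneg A).isSelfAdjoint.adjoint_eq,
    ← mul_def, CFC.sqrt_mul_sqrt_self A hA]

theorem sqrt_apply_eq_zero_of_apply_eq_zero (hA : 0 ≤ A) {x : H} (hx : A x = 0) :
    CFC.sqrt A x = 0 := by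
  have h : ‖CFC.sqrt A x‖ ^ 2 = 0 := by
    rw [norm_sqrt_apply_sq hA, hx, inner_zero_left, map_zero]
  simpa using h

theorem opow_eq_cfc_mul_sqrt (hA : 0 ≤ A) {ν : ℝ} (hν : 1 / 2 ≤ ν) :
    opow A ν = cfc (fun x : ℝ => x ^ (ν - 1 / 2)) A * CFC.sqrt A := by
  rw [CFC.sqrt_eq_rpow, CFC.rpow_eq_cfc_real hA, opow,
    ← cfc_mul _ _ A (Real.continuous_rpow_const (by linarith)).continuousOn
      (Real.continuous_rpow_const (by norm_num)).continuousOn]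
  refine cfc_congr fun x hx => ?_
  rw [← Real.rpow_add_of_nonneg (spectrum_nonneg_of_nonneg hA hx) (by linarith) (by norm_num), sub_add_cancel]

theorem opow_apply_eq_zero_of_apply_eq_zero (hA : 0 ≤ A) {ν : ℝ} (hν : 1 / 2 ≤ ν) {x : H}
    (hx : A x = 0) : opow A ν x = 0 := by
  rw [opow_eq_cfc_mul_sqrt hA hν, mul_def, comp_apply,
    sqrt_apply_eq_zero_of_apply_eq_zero hA hx, map_zero]

end FractionalPower

theorem fractional_power_interpolation_error_in_null_space_general
    {H : Type*} [NormedAddCommGroup H] [InnerProductSpace ℂ H] [CompleteSpace H]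
    {m : ℕ}
    (S : H →L[ℂ] EuclideanSpace ℂ (Fin m))
    (hinv : IsUnit (S ∘L ContinuousLinearMap.adjoint S))
    (ν : ℝ) (hν : (1 : ℝ) / 2 ≤ ν) (f : H) :
    (opow (ContinuousLinearMap.adjoint S ∘L S) ν)
      (f - (ContinuousLinearMap.adjoint S)
        ((Ring.inverse (S ∘L ContinuousLinearMap.adjoint S)) (S f))) = 0 := by
  refine opow_apply_eq_zero_of_apply_eq_zero (adjoint_comp_self_nonneg S) hν ?_
  rw [comp_apply, apply_sub_adjoint_ringInverse_apply_eq_zero S hinv f, map_zero]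

/-- For every real `ν ≥ 1/2` and every `f ∈ H`, one has
`T^ν (f − P f) = 0`, where `T = S* S` and `P = S* (S S*)⁻¹ S`, and `T^ν` is the
fractional power of the positive operator `T` via the continuous functional calculus. -/
theorem fractional_power_interpolation_error_in_null_space
    {H : Type*} [NormedAddCommGroup H] [InnerProductSpace ℂ H] [CompleteSpace H]
    {m : ℕ} (hm : 0 < m)
    (S : H →L[ℂ] EuclideanSpace ℂ (Fin m))
    (hinv : IsUnit (S ∘L ContinuousLinearMap.adjoint S))
    (ν : ℝ) (hν : (1 : ℝ) / 2 ≤ ν) (f : H) :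
    (opow (ContinuousLinearMap.adjoint S ∘L S) ν)
      (f - (ContinuousLinearMap.adjoint S)
        ((Ring.inverse (S ∘L ContinuousLinearMap.adjoint S)) (S f))) = 0 :=
  fractional_power_interpolation_error_in_null_space_general S hinv ν hν f
end

section
/- For every λ > 0 the operator P − (T + λI)⁻¹ T is positive (self-adjoint with nonnegative quadratic form); equivalently, (T + λI)⁻¹ T ≤ P in the Loewner order. (Here T + λI is invertible because T is positive and λ > 0.) -/
/-!
Since `S (S* S + λ) = (S S* + λ) S`, the push-through identity gives
`(T + λ)⁻¹ T = S* (S S* + λ)⁻¹ S`, so `P - (T + λ)⁻¹ T = S* (A⁻¹ - (A + λ)⁻¹) S` with `A = S S*`.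
Inversion is operator antitone on strictly positive operators, hence `A⁻¹ - (A + λ)⁻¹ ≥ 0`,
and conjugating by `S` preserves positivity.
-/

open ContinuousLinearMap

namespace ContinuousLinearMap

section PushThrough

variable {𝕜 E F : Type*} [RCLike 𝕜] [NormedAddCommGroup E] [NormedSpace 𝕜 E]
  [NormedAddCommGroup F] [NormedSpace 𝕜 F]

theorem comp_comp_add_smul_one (a : E →L[𝕜] F) (b : F →L[𝕜] E) (c : 𝕜) :
    b ∘L (a ∘L b + c • 1) = (b ∘L a + c • 1) ∘L b := by
  ext x
  simp

theorem ringInverse_comp_add_smul_one_comp {a : E →L[𝕜] F} {b : F →L[𝕜] E} {c : 𝕜}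
    (hab : IsUnit (a ∘L b + c • 1)) (hba : IsUnit (b ∘L a + c • 1)) :
    Ring.inverse (b ∘L a + c • 1) ∘L b = b ∘L Ring.inverse (a ∘L b + c • 1) :=
  calc Ring.inverse (b ∘L a + c • 1) ∘L b
      = Ring.inverse (b ∘L a + c • 1) ∘L (b ∘L (a ∘L b + c • 1)) ∘L
          Ring.inverse (a ∘L b + c • 1) := by
        rw [comp_assoc, ← mul_def (a ∘L b + c • 1), Ring.mul_inverse_cancel _ hab]
        exact (comp_id _).symm
    _ = b ∘L Ring.inverse (a ∘L b + c • 1) := by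
        rw [comp_comp_add_smul_one, ← comp_assoc, ← comp_assoc, ← mul_def _ (b ∘L a + c • 1),
          Ring.inverse_mul_cancel _ hba]
        exact congrArg (· ∘L _) (id_comp b)

end PushThrough

section Positivity

variable {E : Type*} [NormedAddCommGroup E] [InnerProductSpace ℂ E] [CompleteSpace E]

theorem isStrictlyPositive_ofReal_smul_one {lam : ℝ} (hlam : 0 < lam) :
    IsStrictlyPositive ((lam : ℂ) • (1 : E →L[ℂ] E)) := by
  rw [Complex.coe_smul, ← Algebra.algebraMap_eq_smul_one]
  exact isStrictlyPositive_algebraMap hlam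

theorem IsPositive.isUnit_add_ofReal_smul_one {A : E →L[ℂ] E} (hA : A.IsPositive) {lam : ℝ}
    (hlam : 0 < lam) : IsUnit (A + (lam : ℂ) • 1) :=
  (IsStrictlyPositive.nonneg_add ((nonneg_iff_isPositive A).mpr hA)
    (isStrictlyPositive_ofReal_smul_one hlam)).isUnit

theorem IsPositive.ringInverse_sub_ringInverse_add_ofReal_smul_one {A : E →L[ℂ] E}
    (hA : A.IsPositive) (hunit : IsUnit A) {lam : ℝ} (hlam : 0 < lam) :
    (Ring.inverse A - Ring.inverse (A + (lam : ℂ) • 1)).IsPositive :=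
  CStarAlgebra.ringInverse_le_ringInverse
    (le_add_of_nonneg_right (isStrictlyPositive_ofReal_smul_one hlam).nonneg)
    (hunit.isStrictlyPositive ((nonneg_iff_isPositive A).mpr hA))

end Positivity

end ContinuousLinearMap

theorem projection_dominates_regularized_inverse_general
    {H : Type*} [NormedAddCommGroup H] [InnerProductSpace ℂ H] [CompleteSpace H]
    {m : ℕ}
    (S : H →L[ℂ] EuclideanSpace ℂ (Fin m))
    (hinv : IsUnit (S ∘L ContinuousLinearMap.adjoint S))
    (lam : ℝ) (hlam : 0 < lam) :
    letI T : H →L[ℂ] H := ContinuousLinearMap.adjoint S ∘L S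
    letI P : H →L[ℂ] H :=
      (ContinuousLinearMap.adjoint S) ∘L
        (Ring.inverse (S ∘L ContinuousLinearMap.adjoint S)) ∘L S
    (P - (Ring.inverse (T + (lam : ℂ) • (1 : H →L[ℂ] H))) ∘L T).IsPositive := by
  have hA := isPositive_self_comp_adjoint S
  have push : Ring.inverse (adjoint S ∘L S + (lam : ℂ) • 1) ∘L adjoint S ∘L S =
      adjoint S ∘L Ring.inverse (S ∘L adjoint S + (lam : ℂ) • 1) ∘L S := by
    rw [← comp_assoc, ← comp_assoc, ringInverse_comp_add_smul_one_comp
      (hA.isUnit_add_ofReal_smul_one hlam)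
      ((isPositive_adjoint_comp_self S).isUnit_add_ofReal_smul_one hlam)]
  rw [push, ← comp_sub, ← sub_comp]
  exact (hA.ringInverse_sub_ringInverse_add_ofReal_smul_one hinv hlam).adjoint_conj S

/-- For every `λ > 0`, the operator `P − (T + λI)⁻¹ T` is positive
(self-adjoint with nonnegative quadratic form), where `T = S* S` and
`P = S* (S S*)⁻¹ S`.  (Here `T + λI` is invertible because `T` is positive and
`λ > 0`, so `Ring.inverse (T + λ • 1)` is its genuine inverse.) -/
theorem projection_dominates_regularized_inverse
    {H : Type*} [NormedAddCommGroup H] [InnerProductSpace ℂ H] [CompleteSpace H]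
    {m : ℕ} (hm : 0 < m)
    (S : H →L[ℂ] EuclideanSpace ℂ (Fin m))
    (hinv : IsUnit (S ∘L ContinuousLinearMap.adjoint S))
    (lam : ℝ) (hlam : 0 < lam) :
    letI T : H →L[ℂ] H := ContinuousLinearMap.adjoint S ∘L S
    letI P : H →L[ℂ] H :=
      (ContinuousLinearMap.adjoint S) ∘L
        (Ring.inverse (S ∘L ContinuousLinearMap.adjoint S)) ∘L S
    (P - (Ring.inverse (T + (lam : ℂ) • (1 : H →L[ℂ] H))) ∘L T).IsPositive :=
  projection_dominates_regularized_inverse_general S hinv lam hlam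
end

section
/- For every bounded positive operator L : H → H, every real v ≥ 0 and every λ > 0, one has ‖L^v (I − P)‖ ≤ λ^{1/2} ‖L^v (T + λI)^{−1/2}‖, where ‖·‖ is the operator norm. -/
/-! The complement `Q = 1 - P` of the interpolation projection is an orthogonal projection
annihilated by `S`, hence by `T`. So `T + λ` acts on the range of `Q` as the scalar `λ`, and the
functional calculus turns this into `(T + λ)^{-1/2} Q = λ^{-1/2} Q`. Therefore
`L^v Q = λ^{1/2} L^v (T + λ)^{-1/2} Q`, and `‖Q‖ ≤ 1` gives the bound. -/

open ContinuousLinearMap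

section Interpolation

variable {𝕜 E F : Type*} [RCLike 𝕜] [NormedAddCommGroup E] [InnerProductSpace 𝕜 E]
  [CompleteSpace E] [NormedAddCommGroup F] [InnerProductSpace 𝕜 F] [CompleteSpace F]
  {S : E →L[𝕜] F}

theorem comp_adjoint_comp_inverse_comp (hS : IsUnit (S ∘L adjoint S)) :
    S ∘L adjoint S ∘L Ring.inverse (S ∘L adjoint S) ∘L S = S := by
  have h : (S ∘L adjoint S) * Ring.inverse (S ∘L adjoint S) = 1 :=
    Ring.mul_inverse_cancel _ hS
  simp only [← comp_assoc, ← mul_def, h]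
  rfl

theorem comp_one_sub_adjoint_comp_inverse_comp (hS : IsUnit (S ∘L adjoint S)) :
    S ∘L (1 - adjoint S ∘L Ring.inverse (S ∘L adjoint S) ∘L S) = 0 := by
  rw [comp_sub, one_def, comp_id, comp_adjoint_comp_inverse_comp hS, sub_self]

theorem isStarProjection_adjoint_comp_inverse_comp (hS : IsUnit (S ∘L adjoint S)) :
    IsStarProjection (adjoint S ∘L Ring.inverse (S ∘L adjoint S) ∘L S) where
  isIdempotentElem := by
    change adjoint S ∘L Ring.inverse (S ∘L adjoint S) ∘L
      (S ∘L adjoint S ∘L Ring.inverse (S ∘L adjoint S) ∘L S) = _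
    rw [comp_adjoint_comp_inverse_comp hS]
  isSelfAdjoint := by
    have hsa : IsSelfAdjoint (S ∘L adjoint S) := by
      simp [IsSelfAdjoint, star_eq_adjoint, adjoint_comp]
    rw [IsSelfAdjoint, star_eq_adjoint, adjoint_comp, adjoint_comp, adjoint_adjoint,
      ← star_eq_adjoint (Ring.inverse _), ← Ring.inverse_star, hsa.star_eq, comp_assoc]

end Interpolation

theorem le_of_mem_spectrum_add_algebraMap {A : Type*} [Ring A] [PartialOrder A] [Algebra ℝ A]
    [NonnegSpectrumClass ℝ A] {a : A} (ha : 0 ≤ a) {r x : ℝ}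
    (hx : x ∈ spectrum ℝ (a + algebraMap ℝ A r)) : r ≤ x := by
  rw [← spectrum.add_singleton_eq, Set.add_singleton] at hx
  obtain ⟨y, hy, rfl⟩ := hx
  simpa using spectrum_nonneg_of_nonneg ha hy

theorem rpow_neg_half_eq_mul_sub_add {x r : ℝ} (hx : 0 < x) (hr : 0 < r) :
    x ^ (-(1 / 2) : ℝ) = -(√x * √r * (√x + √r))⁻¹ * (x - r) + r ^ (-(1 / 2) : ℝ) := by
  have hxr : x - r = √x ^ 2 - √r ^ 2 := by rw [Real.sq_sqrt hx.le, Real.sq_sqrt hr.le]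
  rw [Real.rpow_neg hx.le, Real.rpow_neg hr.le, ← Real.sqrt_eq_rpow, ← Real.sqrt_eq_rpow, hxr]
  field_simp
  ring

section FunctionalCalculus

variable {A : Type*} [Ring A] [StarRing A] [Algebra ℝ A] [TopologicalSpace A]
  [ContinuousFunctionalCalculus ℝ A IsSelfAdjoint] {a q : A} {r : ℝ}

/-- The factorisation hypothesis spares approximating `f` by polynomials: it gives
`cfc f a = cfc h a * (a - r) + f r`, and `(a - r) * q = 0`. -/
theorem cfc_mul_eq_smul_of_mul_eq_smul (hq : a * q = r • q) {f h : ℝ → ℝ}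
    (hh : ContinuousOn h (spectrum ℝ a))
    (hfh : ∀ x ∈ spectrum ℝ a, f x = h x * (x - r) + f r)
    (ha : IsSelfAdjoint a := by cfc_tac) :
    cfc f a * q = f r • q := by
  have hlin : ContinuousOn (fun x : ℝ => x - r) (spectrum ℝ a) := by fun_prop
  rw [cfc_congr hfh, cfc_add (a := a) (fun x => h x * (x - r)) (fun _ => f r) (hh.mul hlin),
    cfc_mul h (fun x => x - r) a hh hlin, cfc_sub (fun x : ℝ => x) (fun _ => r) a,
    cfc_id' ℝ a, cfc_const r a, cfc_const (f r) a, add_mul, mul_assoc, sub_mul, hq,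
    ← Algebra.smul_def, sub_self, mul_zero, zero_add, Algebra.smul_def]

theorem cfc_rpow_neg_half_mul_eq_smul (hr : 0 < r) (hq : a * q = r • q)
    (hspec : ∀ x ∈ spectrum ℝ a, 0 < x) (ha : IsSelfAdjoint a := by cfc_tac) :
    cfc (fun x : ℝ => x ^ (-(1 / 2) : ℝ)) a * q = r ^ (-(1 / 2) : ℝ) • q := by
  refine cfc_mul_eq_smul_of_mul_eq_smul hq ?_
    (fun x hx => rpow_neg_half_eq_mul_sub_add (hspec x hx) hr)
  refine ContinuousOn.neg (ContinuousOn.inv₀ (by fun_prop) fun x hx => ?_)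
  have := hspec x hx
  positivity

end FunctionalCalculus

theorem norm_mul_le_of_mul_eq_smul {R : Type*} [NormedRing R] [NormedAlgebra ℝ R]
    {x b q : R} {c : ℝ} (hc : c ≠ 0) (hbq : b * q = c • q) (hq : ‖q‖ ≤ 1) :
    ‖x * q‖ ≤ |c|⁻¹ * ‖x * b‖ := by
  have hxq : x * q = c⁻¹ • (x * b * q) := by
    rw [mul_assoc, hbq, mul_smul_comm, smul_smul, inv_mul_cancel₀ hc, one_smul]
  calc ‖x * q‖ = |c|⁻¹ * ‖x * b * q‖ := by rw [hxq, norm_smul, norm_inv, Real.norm_eq_abs]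
    _ ≤ |c|⁻¹ * (‖x * b‖ * ‖q‖) := by gcongr; exact norm_mul_le _ _
    _ ≤ |c|⁻¹ * ‖x * b‖ := by gcongr; exact mul_le_of_le_one_right (norm_nonneg _) hq

theorem norm_power_compl_projection_le_general
    {H : Type*} [NormedAddCommGroup H] [InnerProductSpace ℂ H] [CompleteSpace H]
    {m : ℕ}
    (S : H →L[ℂ] EuclideanSpace ℂ (Fin m))
    (hinv : IsUnit (S ∘L ContinuousLinearMap.adjoint S))
    (L : H →L[ℂ] H)
    (v : ℝ) (lam : ℝ) (hlam : 0 < lam) :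
    letI T : H →L[ℂ] H := ContinuousLinearMap.adjoint S ∘L S
    letI P : H →L[ℂ] H :=
      (ContinuousLinearMap.adjoint S) ∘L
        (Ring.inverse (S ∘L ContinuousLinearMap.adjoint S)) ∘L S
    ‖(opow L v) ∘L ((1 : H →L[ℂ] H) - P)‖ ≤
      lam ^ ((1 : ℝ) / 2) *
        ‖(opow L v) ∘L opow (T + (lam : ℂ) • (1 : H →L[ℂ] H)) (-(1 / 2))‖ := by
  set T := adjoint S ∘L S
  set P := adjoint S ∘L Ring.inverse (S ∘L adjoint S) ∘L S
  have hT : 0 ≤ T := (nonneg_iff_isPositive T).mpr (isPositive_adjoint_comp_self S)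
  have hA : T + (lam : ℂ) • (1 : H →L[ℂ] H) = T + algebraMap ℝ _ lam := by
    rw [Algebra.algebraMap_eq_smul_one, ← Complex.coe_smul]
  have hAQ : (T + algebraMap ℝ _ lam) * (1 - P) = lam • (1 - P) := by
    have hTQ : T * (1 - P) = 0 := by
      rw [mul_def, comp_assoc, comp_one_sub_adjoint_comp_inverse_comp hinv, comp_zero]
    rw [add_mul, hTQ, zero_add, ← Algebra.smul_def]
  have hpow := cfc_rpow_neg_half_mul_eq_smul hlam hAQ
    (fun x hx => hlam.trans_le (le_of_mem_spectrum_add_algebraMap hT hx))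
    (hT.isSelfAdjoint.add (.algebraMap _ (.all lam)))
  have hQ : ‖1 - P‖ ≤ 1 := (isStarProjection_adjoint_comp_inverse_comp hinv).one_sub.norm_le
  have hbound := norm_mul_le_of_mul_eq_smul (x := opow L v) (by positivity) hpow hQ
  rwa [abs_of_pos (by positivity), ← Real.rpow_neg hlam.le, neg_neg, ← hA] at hbound

/-- For every bounded positive operator `L : H → H`, every real `v ≥ 0`
and every `λ > 0`:  `‖L^v (I − P)‖ ≤ λ^{1/2} ‖L^v (T + λI)^{−1/2}‖`, where
`T = S* S` and `P = S* (S S*)⁻¹ S`, and `‖·‖` is the operator norm. -/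
theorem norm_power_compl_projection_le
    {H : Type*} [NormedAddCommGroup H] [InnerProductSpace ℂ H] [CompleteSpace H]
    {m : ℕ} (hm : 0 < m)
    (S : H →L[ℂ] EuclideanSpace ℂ (Fin m))
    (hinv : IsUnit (S ∘L ContinuousLinearMap.adjoint S))
    (L : H →L[ℂ] H) (hL : L.IsPositive)
    (v : ℝ) (hv : 0 ≤ v) (lam : ℝ) (hlam : 0 < lam) :
    letI T : H →L[ℂ] H := ContinuousLinearMap.adjoint S ∘L S
    letI P : H →L[ℂ] H :=
      (ContinuousLinearMap.adjoint S) ∘L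
        (Ring.inverse (S ∘L ContinuousLinearMap.adjoint S)) ∘L S
    ‖(opow L v) ∘L ((1 : H →L[ℂ] H) - P)‖ ≤
      lam ^ ((1 : ℝ) / 2) *
        ‖(opow L v) ∘L opow (T + (lam : ℂ) • (1 : H →L[ℂ] H)) (-(1 / 2))‖ :=
  norm_power_compl_projection_le_general S hinv L v lam hlam
end

section
/- Let g ∈ H, set f* := L^{1/2} g, let y ∈ ℂ^m, and let f_D := S* (S S*)⁻¹ y. Then for all μ > 0 and λ > 0: ‖L^{1/2} (f_D − f*)‖ ≤ (2 + μ σ_min^{−1}) Q_μ² P_μ + λ Q_λ² ‖g‖, where P_μ := ‖(L + μI)^{−1/2} (T f* − S* y)‖. -/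
open ContinuousLinearMap

/-!
Write `f_D − f* = h − w` with `w := f* − P f*` and `h := S* (S S*)⁻¹ (y − S f*)`. Both terms are
moved from `L^{1/2}` to `(T + λ)^{1/2}` at the cost of a factor `Q_λ`, using
`‖L^{1/2} u‖ ≤ ‖(L + λ)^{1/2} u‖` and
`(L + λ)^{1/2} = [(L + λ)^{1/2} (T + λ)^{-1/2}] (T + λ)^{1/2}`, where the bracket has the norm
of its adjoint `Q_λ`.

Since `S w = 0`, `‖(T + λ)^{1/2} w‖² = λ ‖w‖²`, and `w ⊥ P f*` gives
`‖w‖² = ⟪w, f*⟫ = ⟪L^{1/2} w, g⟫`; together `‖L^{1/2} w‖ ≤ λ Q_λ² ‖g‖`.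
Since `S h = b := y − S f*`, `t := ‖(T + μ)^{1/2} h‖` satisfies
`t² = ‖b‖² + μ ‖h‖² ≤ (1 + μ σ_min⁻¹) ‖b‖²` and
`‖b‖² = ⟪S* b, h⟫ ≤ P_μ ‖(L + μ)^{1/2} h‖ ≤ P_μ Q_μ t`, so `t ≤ (1 + μ σ_min⁻¹) Q_μ P_μ`.
-/

open scoped InnerProductSpace

section Adjoint

variable {𝕜 E : Type*} [RCLike 𝕜] [NormedAddCommGroup E] [InnerProductSpace 𝕜 E] [CompleteSpace E]

lemma norm_apply_le_of_mul_eq_one {X Y Z : E →L[𝕜] E} (hX : IsSelfAdjoint X)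
    (hY : IsSelfAdjoint Y) (hYZ : Y * Z = 1) (u : E) : ‖X u‖ ≤ ‖Y ∘L X‖ * ‖Z u‖ := by
  have hXY : ‖X ∘L Y‖ = ‖Y ∘L X‖ := by
    rw [← adjoint.norm_map (Y ∘L X), adjoint_comp, hX.adjoint_eq, hY.adjoint_eq]
  calc ‖X u‖ = ‖(X ∘L Y) (Z u)‖ := by
        rw [comp_apply, ← mul_apply_eq_comp Y Z u, hYZ, one_apply_eq_self]
    _ ≤ ‖X ∘L Y‖ * ‖Z u‖ := le_opNorm _ _
    _ = ‖Y ∘L X‖ * ‖Z u‖ := by rw [hXY]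

lemma re_inner_le_of_mul_eq_one {X Y : E →L[𝕜] E} (hX : IsSelfAdjoint X) (hXY : X * Y = 1)
    (u v : E) : RCLike.re ⟪u, v⟫_𝕜 ≤ ‖X u‖ * ‖Y v‖ := by
  have : ⟪u, v⟫_𝕜 = ⟪X u, Y v⟫_𝕜 := by
    rw [← adjoint_inner_right, hX.adjoint_eq, ← mul_apply_eq_comp, hXY, one_apply_eq_self]
  rw [this]
  exact re_inner_le_norm _ _

end Adjoint

lemma le_of_sq_le_mul {x c : ℝ} (hc : 0 ≤ c) (h : x ^ 2 ≤ c * x) : x ≤ c := by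
  nlinarith

section FractionalPower

variable {H E : Type*} [NormedAddCommGroup H] [InnerProductSpace ℂ H] [CompleteSpace H]
  [NormedAddCommGroup E] [InnerProductSpace ℂ E] [CompleteSpace E]
  {A T L : H →L[ℂ] H} {μ : ℝ}

lemma opow_eq_rpow (hA : A.IsPositive) (s : ℝ) : opow A s = A ^ s :=
  (CFC.rpow_eq_cfc_real ((nonneg_iff_isPositive A).mpr hA)).symm

lemma isSelfAdjoint_opow (A : H →L[ℂ] H) (s : ℝ) : IsSelfAdjoint (opow A s) :=
  cfc_predicate _ A

lemma norm_opow_half_apply_sq (hA : A.IsPositive) (u : H) :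
    ‖opow A (1 / 2) u‖ ^ 2 = RCLike.re ⟪A u, u⟫_ℂ := by
  have hsq : opow A (1 / 2) * opow A (1 / 2) = A := by
    rw [opow_eq_rpow hA, ← CFC.sqrt_eq_rpow, ← sq, CFC.sq_sqrt A ((nonneg_iff_isPositive A).mpr hA)]
  rw [apply_norm_sq_eq_inner_adjoint_left, (isSelfAdjoint_opow A _).adjoint_eq, ← mul_def, hsq]

lemma isStrictlyPositive_add_smul_one (hA : A.IsPositive) (hμ : 0 < μ) :
    IsStrictlyPositive (A + (μ : ℂ) • (1 : H →L[ℂ] H)) := by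
  have : (μ : ℂ) • (1 : H →L[ℂ] H) = algebraMap ℝ (H →L[ℂ] H) μ := by
    rw [Algebra.algebraMap_eq_smul_one, RCLike.real_smul_eq_coe_smul (K := ℂ)]
    rfl
  rw [this]
  exact IsStrictlyPositive.nonneg_add ((nonneg_iff_isPositive A).mpr hA)
    (isStrictlyPositive_algebraMap hμ)

lemma opow_neg_mul_opow (hA : IsStrictlyPositive A) (s : ℝ) :
    opow A (-s) * opow A s = 1 := by
  rw [opow_eq_rpow, opow_eq_rpow, CFC.rpow_neg_mul_rpow s hA] <;>
    exact (nonneg_iff_isPositive A).mp hA.nonneg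

lemma norm_opow_half_add_smul_one_apply_sq (hA : A.IsPositive) (hμ : 0 < μ) (u : H) :
    ‖opow (A + (μ : ℂ) • (1 : H →L[ℂ] H)) (1 / 2) u‖ ^ 2 = RCLike.re ⟪A u, u⟫_ℂ + μ * ‖u‖ ^ 2 := by
  rw [norm_opow_half_apply_sq
    ((nonneg_iff_isPositive _).mp (isStrictlyPositive_add_smul_one hA hμ).nonneg)]
  simp [← inner_self_eq_norm_sq (𝕜 := ℂ)]

/-- The constant `Q_μ` of the paper. -/
noncomputable def dominationConst (T L : H →L[ℂ] H) (μ : ℝ) : ℝ :=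
  ‖opow (T + (μ : ℂ) • (1 : H →L[ℂ] H)) (-(1 / 2)) ∘L opow (L + (μ : ℂ) • (1 : H →L[ℂ] H)) (1 / 2)‖

lemma norm_opow_half_add_smul_one_apply_le_dominationConst_mul (hT : T.IsPositive) (hμ : 0 < μ)
    (u : H) :
    ‖opow (L + (μ : ℂ) • (1 : H →L[ℂ] H)) (1 / 2) u‖ ≤
      dominationConst T L μ * ‖opow (T + (μ : ℂ) • (1 : H →L[ℂ] H)) (1 / 2) u‖ :=
  norm_apply_le_of_mul_eq_one (isSelfAdjoint_opow _ _) (isSelfAdjoint_opow _ _)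
    (opow_neg_mul_opow (isStrictlyPositive_add_smul_one hT hμ) _) u

lemma norm_opow_half_apply_le_add_smul_one (hL : L.IsPositive) (hμ : 0 < μ) (u : H) :
    ‖opow L (1 / 2) u‖ ≤ ‖opow (L + (μ : ℂ) • (1 : H →L[ℂ] H)) (1 / 2) u‖ := by
  refine le_of_sq_le_sq ?_ (norm_nonneg _)
  rw [norm_opow_half_apply_sq hL, norm_opow_half_add_smul_one_apply_sq hL hμ]
  have := mul_nonneg hμ.le (sq_nonneg ‖u‖)
  linarith

lemma norm_opow_half_apply_le_dominationConst_mul (hT : T.IsPositive) (hL : L.IsPositive)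
    (hμ : 0 < μ) (u : H) :
    ‖opow L (1 / 2) u‖ ≤
      dominationConst T L μ * ‖opow (T + (μ : ℂ) • (1 : H →L[ℂ] H)) (1 / 2) u‖ :=
  (norm_opow_half_apply_le_add_smul_one hL hμ u).trans
    (norm_opow_half_add_smul_one_apply_le_dominationConst_mul hT hμ u)

lemma norm_opow_half_apply_le_of_apply_eq_zero (hT : T.IsPositive) (hL : L.IsPositive) (hμ : 0 < μ)
    {w g : H} (hTw : T w = 0) (horth : ⟪opow L (1 / 2) g - w, w⟫_ℂ = 0) :
    ‖opow L (1 / 2) w‖ ≤ μ * dominationConst T L μ ^ 2 * ‖g‖ := by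
  set Q := dominationConst T L μ
  have hw_sq : ‖opow L (1 / 2) w‖ ^ 2 ≤ μ * Q ^ 2 * ‖w‖ ^ 2 := by
    have hshift := norm_opow_half_add_smul_one_apply_sq hT hμ w
    rw [hTw, inner_zero_left, map_zero, zero_add] at hshift
    calc ‖opow L (1 / 2) w‖ ^ 2
        ≤ (Q * ‖opow (T + (μ : ℂ) • (1 : H →L[ℂ] H)) (1 / 2) w‖) ^ 2 :=
          pow_le_pow_left₀ (norm_nonneg _)
            (norm_opow_half_apply_le_dominationConst_mul hT hL hμ w) 2
      _ = μ * Q ^ 2 * ‖w‖ ^ 2 := by rw [mul_pow, hshift]; ring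
  have hw : ‖w‖ ^ 2 ≤ ‖g‖ * ‖opow L (1 / 2) w‖ := by
    have hinner : ⟪w, w⟫_ℂ = ⟪g, opow L (1 / 2) w⟫_ℂ := by
      rw [inner_sub_left, sub_eq_zero] at horth
      rw [← horth, ← adjoint_inner_right, (isSelfAdjoint_opow L _).adjoint_eq]
    rw [← inner_self_eq_norm_sq (𝕜 := ℂ), hinner]
    exact re_inner_le_norm _ _
  refine le_of_sq_le_mul (by positivity) (hw_sq.trans ?_)
  calc μ * Q ^ 2 * ‖w‖ ^ 2 ≤ μ * Q ^ 2 * (‖g‖ * ‖opow L (1 / 2) w‖) := by gcongr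
    _ = μ * Q ^ 2 * ‖g‖ * ‖opow L (1 / 2) w‖ := by ring

lemma apply_sub_adjoint_apply_eq_zero {S : H →L[ℂ] E} {R : E →L[ℂ] E}
    (hR : (S ∘L adjoint S) * R = 1) (f : H) : S (f - adjoint S (R (S f))) = 0 := by
  rw [map_sub, ← comp_apply S (adjoint S), ← mul_apply_eq_comp, hR, one_apply_eq_self, sub_self]

lemma norm_opow_half_adjoint_apply_le (hL : L.IsPositive) (hμ : 0 < μ) {S : H →L[ℂ] E}
    {R : E →L[ℂ] E} (hR : (S ∘L adjoint S) * R = 1) (b : E) :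
    ‖opow L (1 / 2) (adjoint S (R b))‖ ≤ (1 + μ * ‖R‖) * dominationConst (adjoint S ∘L S) L μ ^ 2 *
      ‖opow (L + (μ : ℂ) • (1 : H →L[ℂ] H)) (-(1 / 2)) (adjoint S b)‖ := by
  set T := adjoint S ∘L S
  set h := adjoint S (R b)
  set Q := dominationConst T L μ
  set P := ‖opow (L + (μ : ℂ) • (1 : H →L[ℂ] H)) (-(1 / 2)) (adjoint S b)‖
  set t := ‖opow (T + (μ : ℂ) • (1 : H →L[ℂ] H)) (1 / 2) h‖
  have hQ : 0 ≤ Q := norm_nonneg _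
  have hT : T.IsPositive := isPositive_adjoint_comp_self S
  have hSh : S h = b := by
    rw [← comp_apply S (adjoint S), ← mul_apply_eq_comp, hR, one_apply_eq_self]
  have hTh : T h = adjoint S b := by rw [comp_apply, hSh]
  have hb : RCLike.re ⟪adjoint S b, h⟫_ℂ = ‖b‖ ^ 2 := by
    rw [adjoint_inner_left, hSh, inner_self_eq_norm_sq]
  have hcs : RCLike.re ⟪adjoint S b, h⟫_ℂ ≤ P * (Q * t) :=
    (re_inner_le_of_mul_eq_one (isSelfAdjoint_opow _ _)
      (opow_neg_mul_opow (isStrictlyPositive_add_smul_one hL hμ) _) _ _).trans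
      (mul_le_mul_of_nonneg_left
        (norm_opow_half_add_smul_one_apply_le_dominationConst_mul hT hμ h) (norm_nonneg _))
  have hh : ‖h‖ ^ 2 ≤ ‖R‖ * ‖b‖ ^ 2 := by
    calc ‖h‖ ^ 2 = RCLike.re ⟪b, R b⟫_ℂ := by
          rw [← inner_self_eq_norm_sq (𝕜 := ℂ), adjoint_inner_right, hSh]
      _ ≤ ‖b‖ * ‖R b‖ := re_inner_le_norm _ _
      _ ≤ ‖b‖ * (‖R‖ * ‖b‖) := by gcongr; exact le_opNorm _ _
      _ = ‖R‖ * ‖b‖ ^ 2 := by ring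
  have ht : t ≤ (1 + μ * ‖R‖) * Q * P := by
    refine le_of_sq_le_mul (by positivity) ?_
    have hsq := norm_opow_half_add_smul_one_apply_sq hT hμ h
    rw [hTh] at hsq
    calc t ^ 2 = RCLike.re ⟪adjoint S b, h⟫_ℂ + μ * ‖h‖ ^ 2 := hsq
      _ ≤ RCLike.re ⟪adjoint S b, h⟫_ℂ + μ * (‖R‖ * RCLike.re ⟪adjoint S b, h⟫_ℂ) := by
          rw [hb]; gcongr
      _ = (1 + μ * ‖R‖) * RCLike.re ⟪adjoint S b, h⟫_ℂ := by ring
      _ ≤ (1 + μ * ‖R‖) * (P * (Q * t)) := by gcongr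
      _ = (1 + μ * ‖R‖) * Q * P * t := by ring
  calc ‖opow L (1 / 2) h‖ ≤ Q * t := norm_opow_half_apply_le_dominationConst_mul hT hL hμ h
    _ ≤ Q * ((1 + μ * ‖R‖) * Q * P) := by gcongr
    _ = (1 + μ * ‖R‖) * Q ^ 2 * P := by ring

end FractionalPower

theorem noisy_interpolation_error_bound_rho_norm_general
    {H : Type*} [NormedAddCommGroup H] [InnerProductSpace ℂ H] [CompleteSpace H]
    {m : ℕ}
    (S : H →L[ℂ] EuclideanSpace ℂ (Fin m))
    (hinv : IsUnit (S ∘L ContinuousLinearMap.adjoint S))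
    (L : H →L[ℂ] H) (hL : L.IsPositive)
    (g : H) (y : EuclideanSpace ℂ (Fin m)) (μ lam : ℝ) (hμ : 0 < μ) (hlam : 0 < lam) :
    letI T : H →L[ℂ] H := ContinuousLinearMap.adjoint S ∘L S
    letI fstar : H := (opow L (1 / 2)) g
    letI fD : H :=
      (ContinuousLinearMap.adjoint S)
        ((Ring.inverse (S ∘L ContinuousLinearMap.adjoint S)) y)
    letI σmin : ℝ := ‖Ring.inverse (S ∘L ContinuousLinearMap.adjoint S)‖⁻¹
    letI Qμ : ℝ := ‖opow (T + (μ : ℂ) • (1 : H →L[ℂ] H)) (-(1 / 2)) ∘L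
        opow (L + (μ : ℂ) • (1 : H →L[ℂ] H)) (1 / 2)‖
    letI Qlam : ℝ := ‖opow (T + (lam : ℂ) • (1 : H →L[ℂ] H)) (-(1 / 2)) ∘L
        opow (L + (lam : ℂ) • (1 : H →L[ℂ] H)) (1 / 2)‖
    letI Pmu : ℝ := ‖(opow (L + (μ : ℂ) • (1 : H →L[ℂ] H)) (-(1 / 2)))
        (T fstar - (ContinuousLinearMap.adjoint S) y)‖
    ‖(opow L (1 / 2)) (fD - fstar)‖ ≤
      (2 + μ * σmin⁻¹) * Qμ ^ (2 : ℕ) * Pmu + lam * Qlam ^ (2 : ℕ) * ‖g‖ := by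
  set R := Ring.inverse (S ∘L adjoint S)
  have hR : (S ∘L adjoint S) * R = 1 := Ring.mul_inverse_cancel _ hinv
  set f := opow L (1 / 2) g
  set w := f - adjoint S (R (S f))
  set h := adjoint S (R (y - S f))
  have hSw : S w = 0 := apply_sub_adjoint_apply_eq_zero hR f
  have hw : ‖opow L (1 / 2) w‖ ≤ lam * dominationConst (adjoint S ∘L S) L lam ^ 2 * ‖g‖ :=
    norm_opow_half_apply_le_of_apply_eq_zero (isPositive_adjoint_comp_self S) hL hlam
      (by rw [comp_apply, hSw, map_zero])
      (by rw [sub_sub_cancel, adjoint_inner_left, hSw, inner_zero_right])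
  have hh := norm_opow_half_adjoint_apply_le hL hμ hR (y - S f)
  have hsplit : adjoint S (R y) - f = h - w := by
    simp only [h, w, map_sub]
    abel
  have hP : adjoint S (y - S f) = -((adjoint S ∘L S) f - adjoint S y) := by
    rw [neg_sub, map_sub, comp_apply]
  rw [hP, map_neg, norm_neg] at hh
  rw [hsplit, map_sub, inv_inv]
  unfold dominationConst at hh hw
  calc ‖opow L (1 / 2) h - opow L (1 / 2) w‖ ≤ ‖opow L (1 / 2) h‖ + ‖opow L (1 / 2) w‖ :=
        norm_sub_le _ _
    _ ≤ _ := add_le_add hh hw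
    _ ≤ _ := by gcongr; linarith

/-- Let `g ∈ H`, set `f* := L^{1/2} g`, let `y ∈ ℂ^m`, and let
`f_D := S* (S S*)⁻¹ y`.  Then for all `μ > 0` and `λ > 0`:
`‖L^{1/2} (f_D − f*)‖ ≤ (2 + μ σ_min^{−1}) Q_μ² P_μ + λ Q_λ² ‖g‖`, where
`P_μ := ‖(L + μI)^{−1/2} (T f* − S* y)‖` and `Q_λ := ‖(T + λI)^{−1/2} (L + λI)^{1/2}‖`. -/
theorem noisy_interpolation_error_bound_rho_norm
    {H : Type*} [NormedAddCommGroup H] [InnerProductSpace ℂ H] [CompleteSpace H]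
    {m : ℕ} (hm : 0 < m)
    (S : H →L[ℂ] EuclideanSpace ℂ (Fin m))
    (hinv : IsUnit (S ∘L ContinuousLinearMap.adjoint S))
    (L : H →L[ℂ] H) (hL : L.IsPositive)
    (g : H) (y : EuclideanSpace ℂ (Fin m)) (μ lam : ℝ) (hμ : 0 < μ) (hlam : 0 < lam) :
    letI T : H →L[ℂ] H := ContinuousLinearMap.adjoint S ∘L S
    letI fstar : H := (opow L (1 / 2)) g
    letI fD : H :=
      (ContinuousLinearMap.adjoint S)
        ((Ring.inverse (S ∘L ContinuousLinearMap.adjoint S)) y)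
    letI σmin : ℝ := ‖Ring.inverse (S ∘L ContinuousLinearMap.adjoint S)‖⁻¹
    letI Qμ : ℝ := ‖opow (T + (μ : ℂ) • (1 : H →L[ℂ] H)) (-(1 / 2)) ∘L
        opow (L + (μ : ℂ) • (1 : H →L[ℂ] H)) (1 / 2)‖
    letI Qlam : ℝ := ‖opow (T + (lam : ℂ) • (1 : H →L[ℂ] H)) (-(1 / 2)) ∘L
        opow (L + (lam : ℂ) • (1 : H →L[ℂ] H)) (1 / 2)‖
    letI Pmu : ℝ := ‖(opow (L + (μ : ℂ) • (1 : H →L[ℂ] H)) (-(1 / 2)))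
        (T fstar - (ContinuousLinearMap.adjoint S) y)‖
    ‖(opow L (1 / 2)) (fD - fstar)‖ ≤
      (2 + μ * σmin⁻¹) * Qμ ^ (2 : ℕ) * Pmu + lam * Qlam ^ (2 : ℕ) * ‖g‖ :=
  noisy_interpolation_error_bound_rho_norm_general S hinv L hL g y μ lam hμ hlam
end

section
/- For every real r with 0 ≤ r ≤ 1, every h ∈ 𝓔 and every λ > 0: ‖𝓛^r h − ι (L + λI)⁻¹ ι* (𝓛^r h)‖_𝓔 ≤ λ^r ‖h‖. (This is the regularization-error bound ‖f* − f_λ‖_ρ ≤ λ^r ‖h*‖_ρ for f* = 𝓛^r h and f_λ := (L + λI)⁻¹ ι* f*.) -/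
/-! By push-through, `ι (L + λ)⁻¹ ι* = (𝓛 + λ)⁻¹ 𝓛`, so the residual is
`(1 - (𝓛 + λ)⁻¹ 𝓛) 𝓛^r h = λ (𝓛 + λ)⁻¹ 𝓛^r h`. By the continuous functional calculus its
operator norm is at most `sup_{x ≥ 0} λ x^r / (x + λ)`, and weighted AM–GM gives
`x^r λ^(1-r) ≤ r x + (1 - r) λ ≤ x + λ`, i.e. `λ x^r / (x + λ) ≤ λ^r`. -/

open ContinuousLinearMap

theorem Real.mul_rpow_div_add_le {x lam r : ℝ} (hx : 0 ≤ x) (hlam : 0 < lam)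
    (hr : 0 ≤ r) (hr' : r ≤ 1) : lam * x ^ r / (x + lam) ≤ lam ^ r := by
  have hamgm : x ^ r * lam ^ (1 - r) ≤ x + lam := by
    calc x ^ r * lam ^ (1 - r) ≤ r * x + (1 - r) * lam :=
          Real.geom_mean_le_arith_mean2_weighted hr (by linarith) hx hlam.le (by ring)
      _ ≤ x + lam := by nlinarith
  rw [div_le_iff₀ (by positivity)]
  calc lam * x ^ r = x ^ r * lam ^ (1 - r) * lam ^ r := by
        rw [mul_assoc, ← Real.rpow_add hlam, sub_add_cancel, Real.rpow_one, mul_comm]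
    _ ≤ (x + lam) * lam ^ r := by gcongr
    _ = lam ^ r * (x + lam) := mul_comm _ _

namespace ContinuousLinearMap

variable {𝕜 E F : Type*} [NontriviallyNormedField 𝕜] [NormedAddCommGroup E] [NormedSpace 𝕜 E]
  [NormedAddCommGroup F] [NormedSpace 𝕜 F]

theorem comp_ringInverse_comp_add_smul_one (S : E →L[𝕜] F) (T : F →L[𝕜] E) (c : 𝕜)
    (hU : IsUnit (T ∘L S + c • 1)) (hV : IsUnit (S ∘L T + c • 1)) :
    S ∘L Ring.inverse (T ∘L S + c • 1) = Ring.inverse (S ∘L T + c • 1) ∘L S := by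
  have intertwine : (S ∘L T + c • 1) ∘L S = S ∘L (T ∘L S + c • 1) := by
    ext x; simp
  calc S ∘L Ring.inverse (T ∘L S + c • 1)
      = (Ring.inverse (S ∘L T + c • 1) * (S ∘L T + c • 1)) ∘L S ∘L
          Ring.inverse (T ∘L S + c • 1) := by
        rw [Ring.inverse_mul_cancel _ hV]; rfl
    _ = Ring.inverse (S ∘L T + c • 1) ∘L S ∘L
          ((T ∘L S + c • 1) * Ring.inverse (T ∘L S + c • 1)) := by
        rw [mul_def, comp_assoc, ← comp_assoc _ S, intertwine]; rfl
    _ = Ring.inverse (S ∘L T + c • 1) ∘L S := by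
        rw [Ring.mul_inverse_cancel _ hU]; rfl

end ContinuousLinearMap

theorem one_sub_ringInverse_add_smul_one_mul {𝕜 R : Type*} [CommSemiring 𝕜] [Ring R]
    [Algebra 𝕜 R] {a : R} {c : 𝕜} (hu : IsUnit (a + c • 1)) :
    1 - Ring.inverse (a + c • 1) * a = c • Ring.inverse (a + c • 1) := by
  have h := Ring.inverse_mul_cancel _ hu
  rw [mul_add, mul_smul_comm, mul_one] at h
  exact sub_eq_of_eq_add' h.symm

namespace CStarAlgebra

variable {A : Type*} [CStarAlgebra A] [PartialOrder A] [StarOrderedRing A] {a : A} {lam : ℝ}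

theorem isUnit_add_smul_one (ha : 0 ≤ a) (hlam : 0 < lam) : IsUnit (a + (lam : ℂ) • 1) := by
  rw [Complex.coe_smul, ← Algebra.algebraMap_eq_smul_one]
  exact (IsStrictlyPositive.nonneg_add ha (isStrictlyPositive_algebraMap hlam)).isUnit

theorem ringInverse_add_smul_one (ha : 0 ≤ a) (hlam : 0 < lam) :
    Ring.inverse (a + (lam : ℂ) • 1) = cfc (fun x : ℝ => (x + lam)⁻¹) a := by
  have hspec : ∀ x ∈ spectrum ℝ a, x + lam ≠ 0 := fun x hx =>
    (add_pos_of_nonneg_of_pos (spectrum_nonneg_of_nonneg ha hx) hlam).ne'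
  rw [cfc_inv _ _ hspec, cfc_add_const _ _ _, cfc_id' ℝ a, Algebra.algebraMap_eq_smul_one,
    Complex.coe_smul]

theorem norm_one_sub_ringInverse_add_smul_one_mul_cfc_rpow_le (ha : 0 ≤ a) (hlam : 0 < lam)
    {r : ℝ} (hr : 0 ≤ r) (hr' : r ≤ 1) :
    ‖(1 - Ring.inverse (a + (lam : ℂ) • 1) * a) * cfc (fun x : ℝ => x ^ r) a‖ ≤ lam ^ r := by
  have hspec : ∀ x ∈ spectrum ℝ a, 0 ≤ x := fun x hx => spectrum_nonneg_of_nonneg ha hx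
  have hcont : ContinuousOn (fun x : ℝ => (x + lam)⁻¹) (spectrum ℝ a) :=
    ContinuousOn.inv₀ (by fun_prop) fun x hx => (add_pos_of_nonneg_of_pos (hspec x hx) hlam).ne'
  have hpow : ContinuousOn (fun x : ℝ => x ^ r) (spectrum ℝ a) :=
    (Real.continuous_rpow_const hr).continuousOn
  rw [one_sub_ringInverse_add_smul_one_mul (isUnit_add_smul_one ha hlam),
    ringInverse_add_smul_one ha hlam, smul_mul_assoc, ← cfc_mul _ _ a hcont hpow, Complex.coe_smul,
    ← cfc_const_mul lam (fun x : ℝ => (x + lam)⁻¹ * x ^ r) a (hcont.mul hpow)]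
  refine norm_cfc_le (by positivity) fun x hx => ?_
  have hx0 := hspec x hx
  rw [Real.norm_of_nonneg (by positivity)]
  convert Real.mul_rpow_div_add_le hx0 hlam hr hr' using 1
  ring

end CStarAlgebra

/-- For every real `0 ≤ r ≤ 1`, every `h ∈ 𝓔` and every `λ > 0`:
`‖𝓛^r h − ι (L + λI)⁻¹ ι* (𝓛^r h)‖ ≤ λ^r ‖h‖`, where `ι : H → 𝓔` is a bounded linear
operator, `L := ι* ι` and `𝓛 := ι ι*`.  (This is the regularization-error bound
`‖f* − f_λ‖_ρ ≤ λ^r ‖h*‖_ρ` for `f* = 𝓛^r h` and `f_λ := (L + λI)⁻¹ ι* f*`.) -/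
theorem regularization_error_bound
    {H : Type*} [NormedAddCommGroup H] [InnerProductSpace ℂ H] [CompleteSpace H]
    {E : Type*} [NormedAddCommGroup E] [InnerProductSpace ℂ E] [CompleteSpace E]
    (ι : H →L[ℂ] E)
    (r : ℝ) (hr : 0 ≤ r) (hr' : r ≤ 1)
    (h : E) (lam : ℝ) (hlam : 0 < lam) :
    letI L : H →L[ℂ] H := ContinuousLinearMap.adjoint ι ∘L ι
    letI bigL : E →L[ℂ] E := ι ∘L ContinuousLinearMap.adjoint ι
    letI fstar : E := (opow bigL r) h
    ‖fstar - ι ((Ring.inverse (L + (lam : ℂ) • (1 : H →L[ℂ] H)))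
        ((ContinuousLinearMap.adjoint ι) fstar))‖ ≤ lam ^ r * ‖h‖ := by
  set L : H →L[ℂ] H := adjoint ι ∘L ι
  set bigL : E →L[ℂ] E := ι ∘L adjoint ι
  have hL : 0 ≤ L := (nonneg_iff_isPositive L).2 (isPositive_adjoint_comp_self ι)
  have hbigL : 0 ≤ bigL := (nonneg_iff_isPositive bigL).2 (isPositive_self_comp_adjoint ι)
  have push_through : ι ∘L Ring.inverse (L + (lam : ℂ) • 1) =
      Ring.inverse (bigL + (lam : ℂ) • 1) ∘L ι :=
    comp_ringInverse_comp_add_smul_one ι (adjoint ι) lam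
      (CStarAlgebra.isUnit_add_smul_one hL hlam) (CStarAlgebra.isUnit_add_smul_one hbigL hlam)
  have residual :
      opow bigL r h - ι (Ring.inverse (L + (lam : ℂ) • 1) (adjoint ι (opow bigL r h))) =
      ((1 - Ring.inverse (bigL + (lam : ℂ) • 1) * bigL) * opow bigL r) h := by
    rw [← comp_apply ι, push_through]
    rfl
  rw [residual]
  calc _ ≤ ‖(1 - Ring.inverse (bigL + (lam : ℂ) • 1) * bigL) * opow bigL r‖ * ‖h‖ :=
        le_opNorm _ _
    _ ≤ lam ^ r * ‖h‖ := by
        gcongr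
        exact
          CStarAlgebra.norm_one_sub_ringInverse_add_smul_one_mul_cfc_rpow_le hbigL hlam hr hr'
end

section
/- For every real β > 1 and every real c₀ > 0 there exists a constant c₁ > 0 (depending only on β and c₀) such that for every λ with 0 < λ ≤ 1: ∑_{ℓ=1}^∞ c₀ ℓ^{−β} / (λ + c₀ ℓ^{−β}) ≤ c₁ λ^{−1/β}. (This bounds the effective dimension 𝒩(λ) of a positive operator whose eigenvalues satisfy σ_ℓ ≤ c₀ ℓ^{−β}.) -/
/-!
Writing the summand as `c₀ / (λ ℓ^β + c₀) = h (λ^{1/β} ℓ)` with `h u = c₀ / (u^β + c₀)`,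
the sum is a right Riemann sum of the decreasing function `x ↦ h (λ^{1/β} x)`, hence at most
its integral over `(0, ∞)`, which by scaling equals `λ^{-1/β} ∫₀^∞ h`. The last integral is
finite because `h u ≤ c₀ u^{-β}` and `β > 1`.
-/

open MeasureTheory Set

theorem tsum_pnat_le_integral_Ioi_of_antitoneOn {f : ℝ → ℝ} (hf : AntitoneOn f (Ici 0))
    (hf_nonneg : ∀ x ∈ Ioi (0 : ℝ), 0 ≤ f x) (hf_int : IntegrableOn f (Ioi 0)) :
    ∑' n : ℕ+, f n ≤ ∫ x in Ioi 0, f x := by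
  rw [tsum_pnat_eq_tsum_succ (f := fun n : ℕ => f n)]
  refine Real.tsum_le_of_sum_range_le
    (fun n => hf_nonneg _ (mem_Ioi.2 (Nat.cast_pos.2 n.succ_pos))) fun n => ?_
  calc ∑ i ∈ Finset.range n, f ↑(i + 1)
      ≤ ∫ x in (0 : ℝ)..n, f x := by
        simpa using (hf.mono Icc_subset_Ici_self).sum_le_integral (x₀ := 0) (a := n)
    _ = ∫ x in Ioc 0 (n : ℝ), f x := intervalIntegral.integral_of_le n.cast_nonneg
    _ ≤ ∫ x in Ioi 0, f x :=
        setIntegral_mono_set hf_int ((ae_restrict_iff' measurableSet_Ioi).2 (.of_forall hf_nonneg))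
          Ioc_subset_Ioi_self.eventuallyLE

section RationalProfile

variable {β c : ℝ}

theorem antitoneOn_div_rpow_add (hβ : 0 ≤ β) (hc : 0 < c) :
    AntitoneOn (fun u : ℝ => c / (u ^ β + c)) (Ici 0) := fun x hx y _ hxy => by
  have := Real.rpow_le_rpow hx hxy hβ
  have := Real.rpow_nonneg hx β
  dsimp only
  gcongr

theorem integrableOn_div_rpow_add (hβ : 1 < β) (hc : 0 < c) :
    IntegrableOn (fun u : ℝ => c / (u ^ β + c)) (Ioi 0) := by
  have hcont : ContinuousOn (fun u : ℝ => c / (u ^ β + c)) (Ici 0) := fun u hu =>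
    (continuousAt_const.div ((Real.continuousAt_rpow_const _ _ (.inr (by linarith))).add
      continuousAt_const)
      (add_pos_of_nonneg_of_pos (Real.rpow_nonneg hu β) hc).ne').continuousWithinAt
  rw [← Ioc_union_Ioi_eq_Ioi zero_le_one, integrableOn_union]
  refine ⟨(hcont.mono Icc_subset_Ici_self).integrableOn_Icc.mono_set Ioc_subset_Icc_self, ?_⟩
  refine ((integrableOn_Ioi_rpow_of_lt (by linarith : -β < -1) one_pos).const_mul c).mono'
    ((hcont.mono (Ioi_subset_Ici zero_le_one)).aestronglyMeasurable measurableSet_Ioi) ?_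
  refine (ae_restrict_iff' measurableSet_Ioi).2 (.of_forall fun u (hu : 1 < u) => ?_)
  have hu_pow : 0 < u ^ β := Real.rpow_pos_of_pos (by linarith) β
  rw [Real.norm_of_nonneg (div_pos hc (add_pos hu_pow hc)).le, Real.rpow_neg (by linarith),
    ← div_eq_mul_inv]
  gcongr
  linarith

theorem integral_Ioi_div_rpow_add_pos (hβ : 1 < β) (hc : 0 < c) :
    0 < ∫ u in Ioi 0, c / (u ^ β + c) := by
  have h_pos : ∀ u ∈ Ioi (0 : ℝ), 0 < c / (u ^ β + c) := fun u hu =>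
    div_pos hc (add_pos (Real.rpow_pos_of_pos hu β) hc)
  rw [setIntegral_pos_iff_support_of_nonneg_ae
    ((ae_restrict_iff' measurableSet_Ioi).2 (.of_forall fun u hu => (h_pos u hu).le))
    (integrableOn_div_rpow_add hβ hc)]
  exact (by simp : (0 : ENNReal) < volume (Ioi (0 : ℝ))).trans_le
    (measure_mono fun u hu => ⟨(h_pos u hu).ne', hu⟩)

theorem mul_rpow_neg_div_add_eq {lam x : ℝ} (hβ : β ≠ 0) (hlam : 0 < lam) (hx : 0 < x) :
    c * x ^ (-β) / (lam + c * x ^ (-β)) = c / ((lam ^ (1 / β) * x) ^ β + c) := by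
  rw [Real.mul_rpow (by positivity) hx.le, ← Real.rpow_mul hlam.le, one_div_mul_cancel hβ,
    Real.rpow_one, Real.rpow_neg hx.le]
  have := Real.rpow_pos_of_pos hx β
  field_simp

end RationalProfile

/-- For every real `β > 1` and every real `c₀ > 0` there exists a
constant `c₁ > 0` (depending only on `β` and `c₀`) such that for every `0 < λ ≤ 1`:
`∑_{ℓ=1}^∞ c₀ ℓ^{−β} / (λ + c₀ ℓ^{−β}) ≤ c₁ λ^{−1/β}`.  (This bounds the effective
dimension `𝒩(λ)` of a positive operator whose eigenvalues satisfy `σ_ℓ ≤ c₀ ℓ^{−β}`.) -/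
theorem effective_dimension_bound_polynomial_decay
    (β c₀ : ℝ) (hβ : 1 < β) (hc₀ : 0 < c₀) :
    ∃ c₁ : ℝ, 0 < c₁ ∧ ∀ lam : ℝ, 0 < lam → lam ≤ 1 →
      (∑' ℓ : ℕ+, c₀ * (ℓ : ℝ) ^ (-β) / (lam + c₀ * (ℓ : ℝ) ^ (-β))) ≤
        c₁ * lam ^ (-1 / β) := by
  set h : ℝ → ℝ := fun u => c₀ / (u ^ β + c₀)
  refine ⟨∫ u in Ioi 0, h u, integral_Ioi_div_rpow_add_pos hβ hc₀, fun lam hlam _ => ?_⟩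
  set a := lam ^ (1 / β)
  have ha : 0 < a := Real.rpow_pos_of_pos hlam _
  calc ∑' ℓ : ℕ+, c₀ * (ℓ : ℝ) ^ (-β) / (lam + c₀ * (ℓ : ℝ) ^ (-β))
      = ∑' ℓ : ℕ+, h (a * ℓ) :=
        tsum_congr fun ℓ => mul_rpow_neg_div_add_eq (by linarith) hlam (by positivity)
    _ ≤ ∫ x in Ioi 0, h (a * x) :=
        tsum_pnat_le_integral_Ioi_of_antitoneOn
          ((antitoneOn_div_rpow_add (by linarith) hc₀).comp_MonotoneOn
            ((monotone_id.const_mul ha.le).monotoneOn _)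
            fun x (hx : 0 ≤ x) => mem_Ici.2 (mul_nonneg ha.le hx))
          (fun x hx => div_nonneg hc₀.le
            (add_pos (Real.rpow_pos_of_pos (mul_pos ha hx) β) hc₀).le)
          ((integrableOn_Ioi_comp_mul_left_iff h 0 ha).2
            (by rw [mul_zero]; exact integrableOn_div_rpow_add hβ hc₀))
    _ = a⁻¹ * ∫ u in Ioi 0, h u := by
        rw [integral_comp_mul_left_Ioi h 0 ha, mul_zero, smul_eq_mul]
    _ = (∫ u in Ioi 0, h u) * lam ^ (-1 / β) := by
        rw [mul_comm, ← Real.rpow_neg hlam.le, neg_div]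
end

section
/- There exists an absolute constant C > 0 such that for every integer d ≥ 1, every real α > 0 and every λ with 0 < λ ≤ e^{−1}: ∑_{ℓ=1}^∞ 1 / (1 + λ e^{α ℓ^{1/d}}) ≤ C · d! · α^{−d} · (log(1/λ))^d. (This bounds the effective dimension 𝒩(λ) of a positive operator whose eigenvalues satisfy σ_ℓ ≤ c₀ e^{−α ℓ^{1/d}}, after rescaling by c₀.) -/
/-!
With `L = log (1/λ) ≥ 1`, each term `1 / (1 + e^{α ℓ^{1/d} - L})` is at most
`e^{-θ (α ℓ^{1/d} - L)}` for every `θ ∈ [0, 1]`. The choice `θ = 1/L` keeps the prefactor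
`e^{θ L} = e` bounded and bounds the series by `e · ∑ e^{-(α/L) ℓ^{1/d}}`; the integral test
compares this with `∫₀^∞ e^{-(α/L) x^{1/d}} dx = Γ(d + 1) (L/α)^d = d! α^{-d} L^d`.
-/

open Real

theorem one_div_one_add_exp_le_exp_neg_mul {θ : ℝ} (hθ₀ : 0 ≤ θ) (hθ₁ : θ ≤ 1) (x : ℝ) :
    1 / (1 + exp x) ≤ exp (-(θ * x)) := by
  have hexp_le : exp (θ * x) ≤ 1 + exp x := by
    rcases le_total x 0 with hx | hx
    · linarith [exp_le_one_iff.2 (mul_nonpos_of_nonneg_of_nonpos hθ₀ hx), exp_pos x]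
    · linarith [exp_le_exp.2 (mul_le_of_le_one_left hx hθ₁)]
  rw [one_div, exp_neg]
  exact inv_anti₀ (exp_pos _) hexp_le

theorem one_div_one_add_mul_exp_le {lam : ℝ} (hlam : 0 < lam) (hL : 1 ≤ log (1 / lam)) (t : ℝ) :
    1 / (1 + lam * exp t) ≤ exp 1 * exp (-(t / log (1 / lam))) := by
  have hlam_eq : lam = exp (-log (1 / lam)) := by
    rw [one_div, log_inv, neg_neg, exp_log hlam]
  set L := log (1 / lam)
  have h := one_div_one_add_exp_le_exp_neg_mul (one_div_nonneg.2 (by linarith))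
    ((div_le_one (by linarith)).2 hL) (t - L)
  rw [hlam_eq, ← exp_add, neg_add_eq_sub, ← exp_add]
  convert h using 2
  field_simp
  ring

section IntegralTest

variable {p b : ℝ}

theorem antitoneOn_exp_neg_mul_rpow (hp : 0 ≤ p) (hb : 0 ≤ b) :
    AntitoneOn (fun x : ℝ ↦ exp (-b * x ^ p)) (Set.Ici 0) :=
  fun _ hx _ _ hxy ↦ exp_le_exp.2 <| by
    nlinarith [rpow_le_rpow (Set.mem_Ici.1 hx) hxy hp]

theorem integrableOn_exp_neg_mul_rpow (hp : 0 < p) (hb : 0 < b) :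
    MeasureTheory.IntegrableOn (fun x : ℝ ↦ exp (-b * x ^ p)) (Set.Ioi 0) := by
  simpa using integrableOn_rpow_mul_exp_neg_mul_rpow neg_one_lt_zero hp hb

theorem summable_pnat_exp_neg_mul_rpow (hp : 0 < p) (hb : 0 < b) :
    Summable fun n : ℕ+ ↦ exp (-b * (n : ℝ) ^ p) := by
  rw [summable_pnat_iff_summable_succ (f := fun n : ℕ ↦ exp (-b * (n : ℝ) ^ p))]
  exact (summable_nat_add_iff 1).2 <|
    (antitoneOn_exp_neg_mul_rpow hp.le hb.le).summable_of_integrableOn_Ioi_zero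
      (integrableOn_exp_neg_mul_rpow hp hb) fun _ _ ↦ (exp_pos _).le

theorem tsum_pnat_exp_neg_mul_rpow_le (hp : 0 < p) (hb : 0 < b) :
    ∑' n : ℕ+, exp (-b * (n : ℝ) ^ p) ≤ b ^ (-1 / p) * Gamma (1 / p + 1) := by
  rw [← integral_exp_neg_mul_rpow hp hb,
    tsum_pnat_eq_tsum_succ (f := fun n : ℕ ↦ exp (-b * (n : ℝ) ^ p))]
  exact (antitoneOn_exp_neg_mul_rpow hp.le hb.le).tsum_add_one_le_integral
    (integrableOn_exp_neg_mul_rpow hp hb) fun _ _ ↦ (exp_pos _).le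

end IntegralTest

/-- There is an absolute constant `C > 0` such that for every integer
`d ≥ 1`, every real `α > 0` and every `0 < λ ≤ e⁻¹`:
`∑_{ℓ=1}^∞ 1 / (1 + λ e^{α ℓ^{1/d}}) ≤ C · d! · α^{−d} · (log(1/λ))^d`. -/
theorem effective_dimension_bound_exponential_decay :
    ∃ C : ℝ, 0 < C ∧ ∀ d : ℕ, 1 ≤ d → ∀ α : ℝ, 0 < α → ∀ lam : ℝ,
      0 < lam → lam ≤ (Real.exp 1)⁻¹ →
      (∑' ℓ : ℕ+, 1 / (1 + lam * Real.exp (α * (ℓ : ℝ) ^ ((1 : ℝ) / d)))) ≤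
        C * (Nat.factorial d : ℝ) * (α ^ d)⁻¹ * (Real.log (1 / lam)) ^ d := by
  refine ⟨exp 1, exp_pos 1, fun d hd α hα lam hlam hlam_le ↦ ?_⟩
  set L := log (1 / lam)
  have hL : 1 ≤ L := by
    rw [le_log_iff_exp_le (by positivity), one_div]
    exact (le_inv_comm₀ hlam (exp_pos 1)).1 hlam_le
  have hp : (0 : ℝ) < 1 / d := by positivity
  have hb : 0 < α / L := by positivity
  have hterm : ∀ ℓ : ℕ+, 1 / (1 + lam * exp (α * (ℓ : ℝ) ^ ((1 : ℝ) / d))) ≤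
      exp 1 * exp (-(α / L) * (ℓ : ℝ) ^ ((1 : ℝ) / d)) := fun ℓ ↦
    (one_div_one_add_mul_exp_le hlam hL _).trans_eq (by congr 2; ring)
  have hmaj := (summable_pnat_exp_neg_mul_rpow hp hb).mul_left (exp 1)
  calc (∑' ℓ : ℕ+, 1 / (1 + lam * exp (α * (ℓ : ℝ) ^ ((1 : ℝ) / d))))
      ≤ ∑' ℓ : ℕ+, exp 1 * exp (-(α / L) * (ℓ : ℝ) ^ ((1 : ℝ) / d)) :=
        (hmaj.of_nonneg_of_le (fun _ ↦ by positivity) hterm).tsum_le_tsum hterm hmaj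
    _ = exp 1 * ∑' ℓ : ℕ+, exp (-(α / L) * (ℓ : ℝ) ^ ((1 : ℝ) / d)) := tsum_mul_left
    _ ≤ exp 1 * ((α / L) ^ (-1 / (1 / d : ℝ)) * Gamma (1 / (1 / d : ℝ) + 1)) := by
        gcongr
        exact tsum_pnat_exp_neg_mul_rpow_le hp hb
    _ = exp 1 * d.factorial * (α ^ d)⁻¹ * L ^ d := by
        rw [one_div_one_div, neg_div, one_div_one_div, Gamma_nat_eq_factorial, rpow_neg hb.le,
          rpow_natCast, div_pow]
        field_simp
end
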